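/- Let Ξ be a linear Hermiticity-preserving map, and suppose (O_{EB,1} ⊗ ... ⊗ Id_m ⊗ ... ⊗ O_{EB,k}) applied after Ξ to ρ_in yields a positive operator whenever Ξ[ρ_in] becomes positive after projection onto the right-singular vectors ψ_n of the rank-one Kraus operators A_n ∝ |φ_n⟩⟨ψ_n| of the EB operations. Then the output ((O_{EB,1} ⊗ ... ⊗ Id_m ⊗ ... ⊗ O_{EB,k}) ∘ Ξ)[ρ_in] is separable with respect to the partition P_j^k. -/

import Mathlib

/-!
Conjugating `X` by the Kraus operator `(⊗_{t ≠ m₀} |φ_t⟩⟨ψ_t|) ⊗ I_{m₀}` collapses every block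
`t ≠ m₀` onto the pure state `|φ_t⟩⟨φ_t|` and leaves on block `m₀` the partial matrix element
`⟨⊗_{t ≠ m₀} ψ_t| X |⊗_{t ≠ m₀} ψ_t⟩`. Each Kraus term is therefore a product operator across the
partition, with positive factors as soon as that partial matrix element is positive, and the sum
of the Kraus terms lies in the separable cone.
-/

open Matrix BigOperators ComplexOrder

noncomputable section

/-- Index set of the full multipartite Hilbert space: party `i` has dimension `d i`. -/
abbrev fullIdx {N : ℕ} (d : Fin N → ℕ) := (i : Fin N) → Fin (d i)

/-- Index set of the Hilbert space of block `t` of the partition given by the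
coloring `c : Fin N → Fin k`. -/
abbrev blockIdx {N : ℕ} (d : Fin N → ℕ) {k : ℕ} (c : Fin N → Fin k) (t : Fin k) :=
  (i : {i : Fin N // c i = t}) → Fin (d i.1)

/-- Tensor product, across the partition encoded by the coloring `c`, of operators
`M t` on the blocks. -/
def prodAcross {N : ℕ} (d : Fin N → ℕ) {k : ℕ} (c : Fin N → Fin k)
    (M : (t : Fin k) → Matrix (blockIdx d c t) (blockIdx d c t) ℂ) :
    Matrix (fullIdx d) (fullIdx d) ℂ :=
  fun x y => ∏ t, M t (fun i => x i.1) (fun i => y i.1)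

/-- A density operator: positive semidefinite with unit trace. -/
def IsState {n : Type*} [Fintype n] (ρ : Matrix n n ℂ) : Prop :=
  ρ.PosSemidef ∧ ρ.trace = 1

/-- `ρ` is separable with respect to the partition encoded by `c`: it is a convex
combination of tensor products of states on the blocks. -/
def SepWrt {N : ℕ} (d : Fin N → ℕ) {k : ℕ} (c : Fin N → Fin k)
    (ρ : Matrix (fullIdx d) (fullIdx d) ℂ) : Prop :=
  ∃ (m : ℕ) (p : Fin m → ℝ)
    (F : Fin m → (t : Fin k) → Matrix (blockIdx d c t) (blockIdx d c t) ℂ),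
    (∀ j, 0 ≤ p j) ∧ (∑ j, p j = 1) ∧ (∀ j t, IsState (F j t)) ∧
    ρ = ∑ j, (p j : ℂ) • prodAcross d c (F j)

/-- `ρ` is `k`-separable: a convex combination of states each separable with respect
to some partition of the parties into exactly `k` blocks. -/
def KSep {N : ℕ} (d : Fin N → ℕ) (k : ℕ)
    (ρ : Matrix (fullIdx d) (fullIdx d) ℂ) : Prop :=
  ∃ (m : ℕ) (p : Fin m → ℝ) (c : Fin m → Fin N → Fin k)
    (σ : Fin m → Matrix (fullIdx d) (fullIdx d) ℂ),
    (∀ j, 0 ≤ p j) ∧ (∑ j, p j = 1) ∧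
    (∀ j, Function.Surjective (c j)) ∧ (∀ j, SepWrt d (c j) (σ j)) ∧
    ρ = ∑ j, (p j : ℂ) • σ j

/-- `R_ent[ρ] ≤ r`: `ρ` is a convex combination of partition-separable states where
every block of every partition used contains at most `r` parties. -/
def REntLe {N : ℕ} (d : Fin N → ℕ) (r : ℕ)
    (ρ : Matrix (fullIdx d) (fullIdx d) ℂ) : Prop :=
  ∃ (m : ℕ) (p : Fin m → ℝ) (c : Fin m → Fin N → Fin N)
    (σ : Fin m → Matrix (fullIdx d) (fullIdx d) ℂ),
    (∀ j, 0 ≤ p j) ∧ (∑ j, p j = 1) ∧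
    (∀ j t, (Finset.univ.filter (fun i => c j i = t)).card ≤ r) ∧
    (∀ j, SepWrt d (c j) (σ j)) ∧
    ρ = ∑ j, (p j : ℂ) • σ j


/-- Restriction of a full multi-index to the block `t` of the partition `c`. -/
def res {N : ℕ} (d : Fin N → ℕ) {k : ℕ} (c : Fin N → Fin k) (x : fullIdx d)
    (t : Fin k) : blockIdx d c t :=
  fun i => x i.1

/-- `X` lies in the cone of operators separable with respect to the partition `c`:
a nonnegative combination of tensor products of positive semidefinite operators on
the blocks. -/
def InSepCone {N : ℕ} (d : Fin N → ℕ) {k : ℕ} (c : Fin N → Fin k)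
    (X : Matrix (fullIdx d) (fullIdx d) ℂ) : Prop :=
  ∃ (m : ℕ) (p : Fin m → ℝ)
    (F : Fin m → (t : Fin k) → Matrix (blockIdx d c t) (blockIdx d c t) ℂ),
    (∀ j, 0 ≤ p j) ∧ (∀ j t, (F j t).PosSemidef) ∧
    X = ∑ j, (p j : ℂ) • prodAcross d c (F j)

open Function

section BlockKraus

variable {N : ℕ} (d : Fin N → ℕ) {k : ℕ} (c : Fin N → Fin k) (m₀ : Fin k)

/-- `(⊗_{t ≠ m₀} |φ t⟩⟨ψ t|) ⊗ I_{m₀}` -/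
def blockKraus (φ ψ : (t : Fin k) → blockIdx d c t → ℂ) : Matrix (fullIdx d) (fullIdx d) ℂ :=
  fun x y => (if res d c x m₀ = res d c y m₀ then 1 else 0) *
    ∏ t, if t = m₀ then 1 else φ t (res d c x t) * starRingEnd ℂ (ψ t (res d c y t))

/-- `⟨⊗_{t ≠ m₀} ψ t| X |⊗_{t ≠ m₀} ψ t⟩`, an operator on block `m₀` -/
def partialInner (ψ : (t : Fin k) → blockIdx d c t → ℂ) (X : Matrix (fullIdx d) (fullIdx d) ℂ) :
    Matrix (blockIdx d c m₀) (blockIdx d c m₀) ℂ :=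
  Matrix.of fun u v => ∑ x, ∑ y,
    if res d c x m₀ = u ∧ res d c y m₀ = v then
      (∏ t, if t = m₀ then 1 else
        starRingEnd ℂ (ψ t (res d c x t)) * ψ t (res d c y t)) * X x y
    else 0

lemma prodAcross_update_apply (G : (t : Fin k) → Matrix (blockIdx d c t) (blockIdx d c t) ℂ)
    (A : Matrix (blockIdx d c m₀) (blockIdx d c m₀) ℂ) (x y : fullIdx d) :
    prodAcross d c (update G m₀ A) x y =
      A (res d c x m₀) (res d c y m₀) *
        ∏ t ∈ Finset.univ.erase m₀, G t (res d c x t) (res d c y t) := by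
  rw [prodAcross, ← Finset.mul_prod_erase _ _ (Finset.mem_univ m₀), update_self]
  congr 1
  exact Finset.prod_congr rfl fun t ht => by rw [update_of_ne (Finset.ne_of_mem_erase ht)]; rfl

theorem blockKraus_mul_mul_conjTranspose (φ ψ : (t : Fin k) → blockIdx d c t → ℂ)
    (X : Matrix (fullIdx d) (fullIdx d) ℂ) :
    blockKraus d c m₀ φ ψ * X * (blockKraus d c m₀ φ ψ)ᴴ =
      prodAcross d c (update (fun t => vecMulVec (φ t) (star (φ t))) m₀
        (partialInner d c m₀ ψ X)) := by
  ext x y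
  rw [prodAcross_update_apply]
  simp only [Matrix.mul_apply, conjTranspose_apply, blockKraus, partialInner, of_apply,
    vecMulVec_apply, Finset.sum_mul]
  rw [Finset.sum_comm]
  refine Finset.sum_congr rfl fun a _ => Finset.sum_congr rfl fun b _ => ?_
  simp only [Finset.prod_ite, Finset.prod_const_one, one_mul, Finset.filter_ne',
    Finset.prod_mul_distrib, star_mul', star_prod, Pi.star_apply]
  simp only [Complex.star_def, Complex.conj_conj]
  split_ifs <;> grind

lemma posSemidef_update_vecMulVec (φ : (t : Fin k) → blockIdx d c t → ℂ)
    {A : Matrix (blockIdx d c m₀) (blockIdx d c m₀) ℂ} (hA : A.PosSemidef) (t : Fin k) :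
    (update (fun t => vecMulVec (φ t) (star (φ t))) m₀ A t).PosSemidef := by
  rcases eq_or_ne t m₀ with rfl | ht
  · rwa [update_self]
  · rw [update_of_ne ht]
    exact posSemidef_vecMulVec_self_star _

lemma inSepCone_sum_prodAcross {ι : Type*} [Fintype ι]
    (F : ι → (t : Fin k) → Matrix (blockIdx d c t) (blockIdx d c t) ℂ)
    (hF : ∀ i t, (F i t).PosSemidef) :
    InSepCone d c (∑ i, prodAcross d c (F i)) := by
  let e := Fintype.equivFin ι
  refine ⟨Fintype.card ι, fun _ => 1, fun j => F (e.symm j), fun _ => zero_le_one,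
    fun j => hF (e.symm j), ?_⟩
  simp only [Complex.ofReal_one, one_smul]
  exact (e.symm.sum_comp fun i => prodAcross d c (F i)).symm

end BlockKraus

theorem dissociation_via_eb_concatenation_general {N : ℕ} (d : Fin N → ℕ) {k : ℕ}
    (c : Fin N → Fin k) (m₀ : Fin k) (r : Fin k → ℕ)
    (φ ψ : (t : Fin k) → Fin (r t) → (blockIdx d c t → ℂ))
    (Ξ : Matrix (fullIdx d) (fullIdx d) ℂ →ₗ[ℂ] Matrix (fullIdx d) (fullIdx d) ℂ)
    (ρin : Matrix (fullIdx d) (fullIdx d) ℂ)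
    -- the combined Kraus operators `(⊗_{t≠m₀} |φ_{t,n t}⟩⟨ψ_{t,n t}|) ⊗ I_{m₀}`
    (K : ((t : Fin k) → Fin (r t)) → Matrix (fullIdx d) (fullIdx d) ℂ)
    (hK : ∀ n x y, K n x y =
      (if res d c x m₀ = res d c y m₀ then 1 else 0) *
        ∏ t, if t = m₀ then 1 else
          φ t (n t) (res d c x t) * (starRingEnd ℂ) (ψ t (n t) (res d c y t)))
    -- positivity of the partial inner products of `Ξ[ρ_in]` on block `m₀`
    (hpos : ∀ n : (t : Fin k) → Fin (r t),
      (Matrix.of (fun u v : blockIdx d c m₀ => ∑ x, ∑ y,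
        if res d c x m₀ = u ∧ res d c y m₀ = v then
          (∏ t, if t = m₀ then 1 else
            (starRingEnd ℂ) (ψ t (n t) (res d c x t)) * ψ t (n t) (res d c y t)) *
            (Ξ ρin) x y
        else 0)).PosSemidef) :
    InSepCone d c (∑ n : (t : Fin k) → Fin (r t), K n * (Ξ ρin) * (K n)ᴴ) := by
  have hK_eq : ∀ n, K n = blockKraus d c m₀ (fun t => φ t (n t)) (fun t => ψ t (n t)) :=
    fun n => Matrix.ext (hK n)
  simp only [hK_eq, blockKraus_mul_mul_conjTranspose]
  exact inSepCone_sum_prodAcross d c _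
    fun n => posSemidef_update_vecMulVec d c m₀ _ (hpos n)

/-- Let `Ξ` be a linear Hermiticity-preserving map on an `N`-partite system, let
`c` encode a partition `P_j^k` into `k` blocks with distinguished block `m₀`, and on
each block `t ≠ m₀` apply an entanglement-breaking operation with rank-one Kraus
operators `A_n ∝ |φ_{t,n}⟩⟨ψ_{t,n}|` (the identity acting on block `m₀`).  If for
every choice of indices `n` the partial inner product of `Ξ[ρ_in]` with the vectors
`⊗_{t≠m₀} ψ_{t,n t}` (leaving block `m₀` untouched) is positive semidefinite, then
the output `((O_EB,1 ⊗ ... ⊗ Id_{m₀} ⊗ ... ⊗ O_EB,k) ∘ Ξ)[ρ_in]` is separable with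
respect to the partition. -/
theorem dissociation_via_eb_concatenation {N : ℕ} (d : Fin N → ℕ) {k : ℕ}
    (c : Fin N → Fin k) (m₀ : Fin k) (r : Fin k → ℕ)
    (φ ψ : (t : Fin k) → Fin (r t) → (blockIdx d c t → ℂ))
    (Ξ : Matrix (fullIdx d) (fullIdx d) ℂ →ₗ[ℂ] Matrix (fullIdx d) (fullIdx d) ℂ)
    (hherm : ∀ A : Matrix (fullIdx d) (fullIdx d) ℂ, A.IsHermitian → (Ξ A).IsHermitian)
    (ρin : Matrix (fullIdx d) (fullIdx d) ℂ) (hρ : IsState ρin)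
    -- the combined Kraus operators `(⊗_{t≠m₀} |φ_{t,n t}⟩⟨ψ_{t,n t}|) ⊗ I_{m₀}`
    (K : ((t : Fin k) → Fin (r t)) → Matrix (fullIdx d) (fullIdx d) ℂ)
    (hK : ∀ n x y, K n x y =
      (if res d c x m₀ = res d c y m₀ then 1 else 0) *
        ∏ t, if t = m₀ then 1 else
          φ t (n t) (res d c x t) * (starRingEnd ℂ) (ψ t (n t) (res d c y t)))
    -- positivity of the partial inner products of `Ξ[ρ_in]` on block `m₀`
    (hpos : ∀ n : (t : Fin k) → Fin (r t),
      (Matrix.of (fun u v : blockIdx d c m₀ => ∑ x, ∑ y,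
        if res d c x m₀ = u ∧ res d c y m₀ = v then
          (∏ t, if t = m₀ then 1 else
            (starRingEnd ℂ) (ψ t (n t) (res d c x t)) * ψ t (n t) (res d c y t)) *
            (Ξ ρin) x y
        else 0)).PosSemidef) :
    InSepCone d c (∑ n : (t : Fin k) → Fin (r t), K n * (Ξ ρin) * (K n)ᴴ) :=
  dissociation_via_eb_concatenation_general d c m₀ r φ ψ Ξ ρin K hK hpos

end
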